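/- Let (𝒪,𝒜,T,e,≼) be a Direct Preference Process such that the restriction of ≼ to Dist(Ω^e) is a total consistent preorder. If a policy π satisfies D^π(h_t) ≽ D^π(h_t·a) for every attainable history h_t of length less than T and every action a, then π is a ≼-optimal policy. -/

import Mathlib

open Finset

/-- A history: an initial observation together with a list of action-observation pairs. -/
abbrev Hist (O A : Type*) := O × List (A × O)

/-- The length (time index) of a history. -/
def hlen {O A : Type*} (h : Hist O A) : ℕ := h.2.length

/-- Append an action-observation pair to a history. -/
def hext {O A : Type*} (h : Hist O A) (a : A) (o : O) : Hist O A :=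
  (h.1, h.2 ++ [(a, o)])

/-- The length-`t` prefix of a history/trajectory. -/
def hpre {O A : Type*} (h : Hist O A) (t : ℕ) : Hist O A := (h.1, h.2.take t)

section DPP

variable {O A : Type*} [Fintype O] [Fintype A] [DecidableEq O] [DecidableEq A]

/-- The finite set of all length-`T` histories (trajectories). -/
def trajFinset (O A : Type*) [Fintype O] [Fintype A] [DecidableEq O] [DecidableEq A]
    (T : ℕ) : Finset (Hist O A) :=
  Finset.image (fun p : O × (Fin T → A × O) => ((p.1, List.ofFn p.2) : Hist O A))
    Finset.univ

/-- `π` is a policy: a distribution over actions for each history. -/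
def IsPolicy (π : Hist O A → A → ℝ) : Prop :=
  ∀ h, (∀ a, 0 ≤ π h a) ∧ ∑ a, π h a = 1

/-- `(ρ0, ρ)` is an environment: an initial observation distribution and
history-dependent transition probabilities. -/
def IsEnv (ρ0 : O → ℝ) (ρ : Hist O A → A → O → ℝ) : Prop :=
  ((∀ o, 0 ≤ ρ0 o) ∧ ∑ o, ρ0 o = 1) ∧
    ∀ h a, (∀ o, 0 ≤ ρ h a o) ∧ ∑ o, ρ h a o = 1

/-- `Dpi ρ π n h` : the distribution over trajectories induced by starting at `h`
(with `n` steps remaining) and following policy `π` in environment `ρ`. -/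
noncomputable def Dpi (ρ : Hist O A → A → O → ℝ) (π : Hist O A → A → ℝ) :
    ℕ → Hist O A → Hist O A → ℝ
  | 0, h, ω => if ω = h then 1 else 0
  | n + 1, h, ω => ∑ a, π h a * ∑ o, ρ h a o * Dpi ρ π n (hext h a o) ω

/-- `D^π(h)` with horizon `T`. -/
noncomputable def DpiH (T : ℕ) (ρ : Hist O A → A → O → ℝ) (π : Hist O A → A → ℝ)
    (h : Hist O A) : Hist O A → ℝ :=
  Dpi ρ π (T - hlen h) h

/-- `D^π(h · a)` : take action `a` at `h`, then follow `π`. -/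
noncomputable def DpiA (T : ℕ) (ρ : Hist O A → A → O → ℝ) (π : Hist O A → A → ℝ)
    (h : Hist O A) (a : A) : Hist O A → ℝ :=
  fun ω => ∑ o, ρ h a o * Dpi ρ π (T - hlen h - 1) (hext h a o) ω

/-- Attainable histories in environment `(ρ0, ρ)`. -/
inductive Attainable (ρ0 : O → ℝ) (ρ : Hist O A → A → O → ℝ) : Hist O A → Prop
  | base (o : O) : 0 < ρ0 o → Attainable ρ0 ρ (o, ([] : List (A × O)))
  | step (h : Hist O A) (a : A) (o : O) :
      Attainable ρ0 ρ h → 0 < ρ h a o → Attainable ρ0 ρ (hext h a o)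

/-- A distribution over trajectories (length-`T` histories). -/
def IsTrajDist (T : ℕ) (D : Hist O A → ℝ) : Prop :=
  (∀ ω, 0 ≤ D ω) ∧ (∀ ω, D ω ≠ 0 → hlen ω = T) ∧
    ∑ ω ∈ trajFinset O A T, D ω = 1

/-- A distribution over the attainable trajectories `Ω^e`. -/
def IsAttDist (T : ℕ) (ρ0 : O → ℝ) (ρ : Hist O A → A → O → ℝ)
    (D : Hist O A → ℝ) : Prop :=
  IsTrajDist T D ∧ ∀ ω, D ω ≠ 0 → Attainable ρ0 ρ ω

/-- Pointwise convex combination. -/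
def mix {X : Type*} (α : ℝ) (A B : X → ℝ) : X → ℝ :=
  fun x => α * A x + (1 - α) * B x

/-- The restriction of `R` to `Dist(Ω^e)` is a total consistent preorder. -/
def RestrTotalConsistentPreorder (T : ℕ) (ρ0 : O → ℝ)
    (ρ : Hist O A → A → O → ℝ) (R : (Hist O A → ℝ) → (Hist O A → ℝ) → Prop) : Prop :=
  (∀ D, IsAttDist T ρ0 ρ D → R D D) ∧
  (∀ D₁ D₂ D₃, IsAttDist T ρ0 ρ D₁ → IsAttDist T ρ0 ρ D₂ → IsAttDist T ρ0 ρ D₃ →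
    R D₁ D₂ → R D₂ D₃ → R D₁ D₃) ∧
  (∀ D₁ D₂, IsAttDist T ρ0 ρ D₁ → IsAttDist T ρ0 ρ D₂ → (R D₁ D₂ ∨ R D₂ D₁)) ∧
  (∀ α : ℝ, 0 < α → α < 1 → ∀ D₁ D₂ D₃, IsAttDist T ρ0 ρ D₁ →
    IsAttDist T ρ0 ρ D₂ → IsAttDist T ρ0 ρ D₃ →
    R D₁ D₂ → R (mix α D₁ D₃) (mix α D₂ D₃))

/-- `π` is a `≼`-optimal policy. -/
def OptimalPolicy (T : ℕ) (ρ0 : O → ℝ) (ρ : Hist O A → A → O → ℝ)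
    (R : (Hist O A → ℝ) → (Hist O A → ℝ) → Prop) (π : Hist O A → A → ℝ) : Prop :=
  ∀ h, Attainable ρ0 ρ h → hlen h ≤ T →
    ∀ π', IsPolicy π' → R (DpiH T ρ π' h) (DpiH T ρ π h)

/-- The optimal action set of policy `π` at history `h`. -/
def OptActions (T : ℕ) (ρ : Hist O A → A → O → ℝ)
    (R : (Hist O A → ℝ) → (Hist O A → ℝ) → Prop) (π : Hist O A → A → ℝ)
    (h : Hist O A) : Set A :=
  {a | ∀ a', R (DpiA T ρ π h a') (DpiA T ρ π h a)}

end DPP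

/-!
Backward induction on the remaining horizon `T - hlen h`. Transitivity and consistency of `≼`
on `Dist(Ω^e)`, a convex set, extend consistency from two-point mixtures to finite convex
combinations. At `h`, the induction hypothesis under each `ρ(· | h, a)` and then greediness give
`D^π'(h) = ∑ₐ π'(a|h) D^π'(h·a) ≼ ∑ₐ π'(a|h) D^π(h·a) ≼ ∑ₐ π'(a|h) D^π(h) = D^π(h)`.
-/

section ConvexCombination

variable {E ι : Type*} [AddCommGroup E] [Module ℝ E] {S : Set E} {s : Finset ι} {w : ι → ℝ}

theorem Finset.sum_filter_pos_smul (h0 : ∀ i ∈ s, 0 ≤ w i) (F : ι → E) :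
    ∑ i ∈ s with 0 < w i, w i • F i = ∑ i ∈ s, w i • F i :=
  Finset.sum_filter_of_ne fun i hi hwF => (h0 i hi).lt_of_ne' (left_ne_zero_of_smul hwF)

theorem Finset.sum_filter_pos (h0 : ∀ i ∈ s, 0 ≤ w i) :
    ∑ i ∈ s with 0 < w i, w i = ∑ i ∈ s, w i := by
  simpa using Finset.sum_filter_pos_smul h0 (fun _ => (1 : ℝ))

theorem Convex.sum_mem_of_pos (hS : Convex ℝ S) {F : ι → E} (h0 : ∀ i ∈ s, 0 ≤ w i)
    (h1 : ∑ i ∈ s, w i = 1) (hF : ∀ i ∈ s, 0 < w i → F i ∈ S) :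
    ∑ i ∈ s, w i • F i ∈ S := by
  rw [← Finset.sum_filter_pos_smul h0]
  refine hS.sum_mem (fun i hi => h0 i (Finset.mem_filter.1 hi).1)
    (by rwa [Finset.sum_filter_pos h0]) fun i hi => ?_
  exact hF i (Finset.mem_filter.1 hi).1 (Finset.mem_filter.1 hi).2

variable {R : E → E → Prop}

theorem rel_sum_smul_of_pos (hS : Convex ℝ S)
    (htrans : ∀ x ∈ S, ∀ y ∈ S, ∀ z ∈ S, R x y → R y z → R x z)
    (hcons : ∀ α : ℝ, 0 < α → α < 1 → ∀ x ∈ S, ∀ y ∈ S, ∀ z ∈ S,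
      R x y → R (α • x + (1 - α) • z) (α • y + (1 - α) • z))
    {F G : ι → E} (hw : ∀ i ∈ s, 0 < w i) (h1 : ∑ i ∈ s, w i = 1)
    (hF : ∀ i ∈ s, F i ∈ S) (hG : ∀ i ∈ s, G i ∈ S) (hFG : ∀ i ∈ s, R (F i) (G i)) :
    R (∑ i ∈ s, w i • F i) (∑ i ∈ s, w i • G i) := by
  induction s using Finset.cons_induction generalizing w with
  | empty => simp at h1
  | cons a s ha ih =>
    simp only [Finset.forall_mem_cons] at hw hF hG hFG
    rw [Finset.sum_cons] at h1
    rcases s.eq_empty_or_nonempty with rfl | hs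
    · simpa [show w a = 1 by simpa using h1] using hFG.1
    set c := ∑ i ∈ s, w i
    have hc : 0 < c := Finset.sum_pos (fun i hi => hw.2 i hi) hs
    have hwa : w a = 1 - c := by linarith
    have split : ∀ H : ι → E,
        ∑ i ∈ s.cons a ha, w i • H i = w a • H a + (1 - w a) • ∑ i ∈ s, (c⁻¹ * w i) • H i := by
      intro H
      rw [Finset.sum_cons, hwa, sub_sub_cancel, Finset.smul_sum]
      simp only [smul_smul, mul_inv_cancel_left₀ hc.ne']
    have hw' : ∀ i ∈ s, 0 < c⁻¹ * w i := fun i hi => mul_pos (inv_pos.2 hc) (hw.2 i hi)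
    have h1' : ∑ i ∈ s, c⁻¹ * w i = 1 := by rw [← Finset.mul_sum, inv_mul_cancel₀ hc.ne']
    have hF' := hS.sum_mem (fun i hi => (hw' i hi).le) h1' hF.2
    have hG' := hS.sum_mem (fun i hi => (hw' i hi).le) h1' hG.2
    have hα : 0 < w a ∧ w a < 1 := ⟨hw.1, by linarith⟩
    have hmem : ∀ {x y}, x ∈ S → y ∈ S → w a • x + (1 - w a) • y ∈ S :=
      fun hx hy => hS hx hy hα.1.le (by linarith) (by ring)
    rw [split F, split G]
    refine htrans _ (hmem hF.1 hF') _ (hmem hG.1 hF') _ (hmem hG.1 hG')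
      (hcons _ hα.1 hα.2 _ hF.1 _ hG.1 _ hF' hFG.1) ?_
    have := hcons (1 - w a) (by linarith) (by linarith) _ hF' _ hG' _ hG.1
      (ih hw' h1' hF.2 hG.2 hFG.2)
    rwa [sub_sub_cancel, add_comm, add_comm (_ • ∑ i ∈ s, _)] at this

theorem rel_sum_smul (hS : Convex ℝ S)
    (htrans : ∀ x ∈ S, ∀ y ∈ S, ∀ z ∈ S, R x y → R y z → R x z)
    (hcons : ∀ α : ℝ, 0 < α → α < 1 → ∀ x ∈ S, ∀ y ∈ S, ∀ z ∈ S,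
      R x y → R (α • x + (1 - α) • z) (α • y + (1 - α) • z))
    {F G : ι → E} (h0 : ∀ i ∈ s, 0 ≤ w i) (h1 : ∑ i ∈ s, w i = 1)
    (hF : ∀ i ∈ s, 0 < w i → F i ∈ S) (hG : ∀ i ∈ s, 0 < w i → G i ∈ S)
    (hFG : ∀ i ∈ s, 0 < w i → R (F i) (G i)) :
    R (∑ i ∈ s, w i • F i) (∑ i ∈ s, w i • G i) := by
  rw [← Finset.sum_filter_pos_smul h0, ← Finset.sum_filter_pos_smul h0]
  simp only [← Finset.sum_filter_pos h0] at h1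
  refine rel_sum_smul_of_pos hS htrans hcons (fun i hi => (Finset.mem_filter.1 hi).2) h1
    ?_ ?_ ?_ <;> intro i hi <;> rw [Finset.mem_filter] at hi
  exacts [hF i hi.1 hi.2, hG i hi.1 hi.2, hFG i hi.1 hi.2]

end ConvexCombination

section DPP

variable {O A : Type*}

theorem hlen_hext (h : Hist O A) (a : A) (o : O) : hlen (hext h a o) = hlen h + 1 := by
  simp [hlen, hext]

variable [Fintype O] [Fintype A] [DecidableEq O] [DecidableEq A]
  {T : ℕ} {ρ0 : O → ℝ} {ρ : Hist O A → A → O → ℝ} {σ : Hist O A → A → ℝ}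

theorem mem_trajFinset_hlen (h : Hist O A) : h ∈ trajFinset O A (hlen h) :=
  Finset.mem_image.2 ⟨(h.1, h.2.get), Finset.mem_univ _, Prod.ext rfl (List.ofFn_get _)⟩

theorem convex_isAttDist : Convex ℝ {D : Hist O A → ℝ | IsAttDist T ρ0 ρ D} := by
  rintro D₁ ⟨⟨hD₁0, hD₁T, hD₁1⟩, hD₁att⟩ D₂ ⟨⟨hD₂0, hD₂T, hD₂1⟩, hD₂att⟩ a b ha hb hab
  have hsupp : ∀ ω, (a • D₁ + b • D₂) ω ≠ 0 → D₁ ω ≠ 0 ∨ D₂ ω ≠ 0 := by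
    intro ω hω
    by_contra! h
    simp [h] at hω
  refine ⟨⟨fun ω => ?_, fun ω hω => ?_, ?_⟩, fun ω hω => ?_⟩
  · simp only [Pi.add_apply, Pi.smul_apply, smul_eq_mul]
    exact add_nonneg (mul_nonneg ha (hD₁0 ω)) (mul_nonneg hb (hD₂0 ω))
  · exact (hsupp ω hω).elim (hD₁T ω) (hD₂T ω)
  · simp [Finset.sum_add_distrib, ← Finset.mul_sum, hD₁1, hD₂1, hab]
  · exact (hsupp ω hω).elim (hD₁att ω) (hD₂att ω)

theorem isAttDist_single {h : Hist O A} (hatt : Attainable ρ0 ρ h) :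
    IsAttDist (hlen h) ρ0 ρ (Pi.single h 1) := by
  have hsupp : ∀ ω, (Pi.single h 1 : Hist O A → ℝ) ω ≠ 0 → ω = h := fun ω hω => by
    by_contra hne
    simp [hne] at hω
  refine ⟨⟨fun ω => ?_, fun ω hω => by rw [hsupp ω hω], ?_⟩, fun ω hω => by rwa [hsupp ω hω]⟩
  · by_cases hω : ω = h <;> simp [hω]
  · simp [Finset.sum_pi_single', mem_trajFinset_hlen]

theorem DpiH_eq_single (h : Hist O A) (hT : T ≤ hlen h) : DpiH T ρ σ h = Pi.single h 1 := by
  funext ω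
  simp [DpiH, Nat.sub_eq_zero_of_le hT, Dpi, Pi.single_apply]

theorem DpiH_eq_sum_smul_DpiA (h : Hist O A) (hT : hlen h < T) :
    DpiH T ρ σ h = ∑ a, σ h a • DpiA T ρ σ h a := by
  obtain ⟨n, hn⟩ : ∃ n, T - hlen h = n + 1 := ⟨T - hlen h - 1, by omega⟩
  funext ω
  simp [DpiH, DpiA, hn, Dpi, Finset.sum_apply]

theorem DpiA_eq_sum_smul_DpiH (h : Hist O A) (a : A) :
    DpiA T ρ σ h a = ∑ o, ρ h a o • DpiH T ρ σ (hext h a o) := by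
  funext ω
  simp [DpiA, DpiH, hlen_hext, Nat.sub_sub, Finset.sum_apply]

theorem isAttDist_DpiA (henv : IsEnv ρ0 ρ) {h : Hist O A} {a : A}
    (hnext : ∀ o, 0 < ρ h a o → IsAttDist T ρ0 ρ (DpiH T ρ σ (hext h a o))) :
    IsAttDist T ρ0 ρ (DpiA T ρ σ h a) := by
  rw [DpiA_eq_sum_smul_DpiH]
  exact convex_isAttDist.sum_mem_of_pos (fun o _ => (henv.2 h a).1 o) (henv.2 h a).2
    fun o _ => hnext o

theorem isAttDist_DpiH (henv : IsEnv ρ0 ρ) (hσ : IsPolicy σ) {h : Hist O A}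
    (hatt : Attainable ρ0 ρ h) (hT : hlen h ≤ T) : IsAttDist T ρ0 ρ (DpiH T ρ σ h) := by
  obtain ⟨k, hk⟩ : ∃ k, hlen h + k = T := ⟨T - hlen h, by omega⟩
  induction k generalizing h with
  | zero =>
    rw [DpiH_eq_single h (by omega), ← hk]
    exact isAttDist_single hatt
  | succ k ih =>
    rw [DpiH_eq_sum_smul_DpiA h (by omega)]
    refine convex_isAttDist.sum_mem (fun a _ => (hσ h).1 a) (hσ h).2 fun a _ => ?_
    exact isAttDist_DpiA henv fun o ho =>
      ih (Attainable.step h a o hatt ho) (by rw [hlen_hext]; omega) (by rw [hlen_hext]; omega)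

theorem RestrTotalConsistentPreorder.rel_sum_smul
    {R : (Hist O A → ℝ) → (Hist O A → ℝ) → Prop} (hR : RestrTotalConsistentPreorder T ρ0 ρ R)
    {ι : Type*} {s : Finset ι} {w : ι → ℝ} {F G : ι → Hist O A → ℝ}
    (h0 : ∀ i ∈ s, 0 ≤ w i) (h1 : ∑ i ∈ s, w i = 1)
    (hF : ∀ i ∈ s, 0 < w i → IsAttDist T ρ0 ρ (F i))
    (hG : ∀ i ∈ s, 0 < w i → IsAttDist T ρ0 ρ (G i))
    (hFG : ∀ i ∈ s, 0 < w i → R (F i) (G i)) :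
    R (∑ i ∈ s, w i • F i) (∑ i ∈ s, w i • G i) :=
  _root_.rel_sum_smul convex_isAttDist (fun x hx y hy z hz => hR.2.1 x y z hx hy hz)
    (fun α hα0 hα1 x hx y hy z hz => hR.2.2.2 α hα0 hα1 x y z hx hy hz) h0 h1 hF hG hFG

theorem rel_DpiH_of_rel_DpiA {R : (Hist O A → ℝ) → (Hist O A → ℝ) → Prop}
    (hR : RestrTotalConsistentPreorder T ρ0 ρ R) (henv : IsEnv ρ0 ρ)
    {π π' : Hist O A → A → ℝ} (hπ : IsPolicy π) (hπ' : IsPolicy π') {h : Hist O A}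
    (hatt : Attainable ρ0 ρ h) (hT : hlen h < T)
    (hnext : ∀ a o, 0 < ρ h a o → R (DpiH T ρ π' (hext h a o)) (DpiH T ρ π (hext h a o)))
    (hgreedy : ∀ a, R (DpiA T ρ π h a) (DpiH T ρ π h)) :
    R (DpiH T ρ π' h) (DpiH T ρ π h) := by
  have hDpiA : ∀ {σ}, IsPolicy σ → ∀ a, IsAttDist T ρ0 ρ (DpiA T ρ σ h a) :=
    fun hσ a => isAttDist_DpiA henv fun o ho =>
      isAttDist_DpiH henv hσ (Attainable.step h a o hatt ho) (by rw [hlen_hext]; omega)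
  have hDpiH : IsAttDist T ρ0 ρ (DpiH T ρ π h) := isAttDist_DpiH henv hπ hatt hT.le
  have hact : ∀ a, R (DpiA T ρ π' h a) (DpiA T ρ π h a) := by
    intro a
    simp only [DpiA_eq_sum_smul_DpiH (h := h)]
    refine hR.rel_sum_smul (fun o _ => (henv.2 h a).1 o) (henv.2 h a).2 ?_ ?_
      fun o _ ho => hnext a o ho
    all_goals exact fun o _ ho =>
      isAttDist_DpiH henv ‹_› (Attainable.step h a o hatt ho) (by rw [hlen_hext]; omega)
  have h0 : ∀ a ∈ Finset.univ, 0 ≤ π' h a := fun a _ => (hπ' h).1 a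
  have hfirst : R (∑ a, π' h a • DpiA T ρ π' h a) (∑ a, π' h a • DpiA T ρ π h a) :=
    hR.rel_sum_smul h0 (hπ' h).2 (fun a _ _ => hDpiA hπ' a) (fun a _ _ => hDpiA hπ a)
      fun a _ _ => hact a
  have hsecond : R (∑ a, π' h a • DpiA T ρ π h a) (∑ a, π' h a • DpiH T ρ π h) :=
    hR.rel_sum_smul h0 (hπ' h).2 (fun a _ _ => hDpiA hπ a) (fun _ _ _ => hDpiH)
      fun a _ _ => hgreedy a
  rw [← Finset.sum_smul, (hπ' h).2, one_smul] at hsecond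
  rw [DpiH_eq_sum_smul_DpiA h hT]
  exact hR.2.1 _ _ _ (convex_isAttDist.sum_mem h0 (hπ' h).2 fun a _ => hDpiA hπ' a)
    (convex_isAttDist.sum_mem h0 (hπ' h).2 fun a _ => hDpiA hπ a) hDpiH hfirst hsecond

end DPP

theorem optimal_of_greedy_general {O A : Type*} [Fintype O] [Fintype A]
    [DecidableEq O] [DecidableEq A]
    (T : ℕ) (ρ0 : O → ℝ) (ρ : Hist O A → A → O → ℝ) (henv : IsEnv ρ0 ρ)
    (R : (Hist O A → ℝ) → (Hist O A → ℝ) → Prop)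
    (hR : RestrTotalConsistentPreorder T ρ0 ρ R)
    (π : Hist O A → A → ℝ) (hπ : IsPolicy π)
    (hgreedy : ∀ h, Attainable ρ0 ρ h → hlen h < T → ∀ a : A,
      R (DpiA T ρ π h a) (DpiH T ρ π h)) :
    OptimalPolicy T ρ0 ρ R π := by
  intro h hatt hT π' hπ'
  obtain ⟨k, hk⟩ : ∃ k, hlen h + k = T := ⟨T - hlen h, by omega⟩
  induction k generalizing h with
  | zero =>
    rw [DpiH_eq_single h (by omega), DpiH_eq_single h (by omega)]
    exact hR.1 _ (hk ▸ isAttDist_single hatt)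
  | succ k ih =>
    refine rel_DpiH_of_rel_DpiA hR henv hπ hπ' hatt (by omega) (fun a o ho => ?_)
      (hgreedy h hatt (by omega))
    exact ih _ (Attainable.step h a o hatt ho) (by rw [hlen_hext]; omega)
      (by rw [hlen_hext]; omega)

/-- a policy preferring `D^π(h)` to every `D^π(h·a)` is optimal. -/
theorem optimal_of_greedy {O A : Type*} [Fintype O] [Fintype A]
    [DecidableEq O] [DecidableEq A] [Nonempty O] [Nonempty A]
    (T : ℕ) (ρ0 : O → ℝ) (ρ : Hist O A → A → O → ℝ) (henv : IsEnv ρ0 ρ)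
    (R : (Hist O A → ℝ) → (Hist O A → ℝ) → Prop)
    (hR : RestrTotalConsistentPreorder T ρ0 ρ R)
    (π : Hist O A → A → ℝ) (hπ : IsPolicy π)
    (hgreedy : ∀ h, Attainable ρ0 ρ h → hlen h < T → ∀ a : A,
      R (DpiA T ρ π h a) (DpiH T ρ π h)) :
    OptimalPolicy T ρ0 ρ R π :=
  optimal_of_greedy_general T ρ0 ρ henv R hR π hπ hgreedy
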